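/- arXiv:2312.00995 — 2 statements merged into one kernel-verified Lean document; each statement's English description precedes it below -/
import Mathlib

section
/- Let Y be a finite set with |Y| = K ≥ 2 and Δ the probability simplex on Y. For any probability measure Q on Δ, define EU(Q) = (1/2)·min_{q∈Δ} E_{p∼Q}[‖p − q‖₁]. Then EU(Q) ≤ (K−1)/K. -/
open MeasureTheory Finset

/-!
The barycenter `u = (1/K, …, 1/K)` is a candidate for `q`. For `p` in the simplex,
`‖p - u‖₁ = 2 (1 - ∑ᵢ min (pᵢ, 1/K))`, and some coordinate `pᵢ` is at least `1/K`, so the sum of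
minima is at least `1/K`; hence `‖p - u‖₁ ≤ 2 (1 - 1/K)` pointwise on the support of `Q`.
-/

namespace stdSimplex

lemma nonempty_of_mem {𝕜 ι : Type*} [Semiring 𝕜] [PartialOrder 𝕜] [Nontrivial 𝕜] [Fintype ι]
    {p : ι → 𝕜} (hp : p ∈ stdSimplex 𝕜 ι) : Nonempty ι :=
  univ_nonempty_iff.mp (nonempty_of_sum_ne_zero (hp.2 ▸ one_ne_zero))

variable {𝕜 ι : Type*} [Field 𝕜] [LinearOrder 𝕜] [IsStrictOrderedRing 𝕜] [Fintype ι]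
  {p q : ι → 𝕜}

/-- `|a - b| = a + b - 2 min a b`, summed over two probability vectors. -/
theorem sum_abs_sub_eq (hp : p ∈ stdSimplex 𝕜 ι) (hq : q ∈ stdSimplex 𝕜 ι) :
    ∑ i, |p i - q i| = 2 * (1 - ∑ i, min (p i) (q i)) := by
  have hpoint : ∀ i, |p i - q i| = p i + q i - 2 * min (p i) (q i) := fun i => by
    rw [← max_sub_min_eq_abs']
    linarith [min_add_max (p i) (q i)]
  simp only [hpoint, sum_sub_distrib, sum_add_distrib, ← mul_sum, hp.2, hq.2]
  ring

theorem exists_inv_card_le (hp : p ∈ stdSimplex 𝕜 ι) :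
    ∃ i, (Fintype.card ι : 𝕜)⁻¹ ≤ p i := by
  have := nonempty_of_mem hp
  have hsum : ∑ _ : ι, (Fintype.card ι : 𝕜)⁻¹ ≤ ∑ i, p i := by
    simp [hp.2]
  simpa using exists_le_of_sum_le univ_nonempty hsum

theorem sum_abs_sub_inv_card_le (hp : p ∈ stdSimplex 𝕜 ι) :
    ∑ i, |p i - (Fintype.card ι : 𝕜)⁻¹| ≤ 2 * (1 - (Fintype.card ι : 𝕜)⁻¹) := by
  have := nonempty_of_mem hp
  obtain ⟨i₀, hi₀⟩ := exists_inv_card_le hp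
  have hmin : (Fintype.card ι : 𝕜)⁻¹ ≤ ∑ i, min (p i) (Fintype.card ι : 𝕜)⁻¹ :=
    calc (Fintype.card ι : 𝕜)⁻¹ = min (p i₀) (Fintype.card ι : 𝕜)⁻¹ := (min_eq_right hi₀).symm
      _ ≤ _ := single_le_sum (fun i _ => le_min (hp.1 i) (by positivity)) (mem_univ i₀)
  have hdist := sum_abs_sub_eq hp (barycenter : stdSimplex 𝕜 ι).2
  simp only [barycenter_apply] at hdist
  linarith

end stdSimplex

theorem stmt_6_general {K : ℕ}
    (Q : Measure (Fin K → ℝ)) [IsProbabilityMeasure Q]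
    (hsupp : ∀ᵐ p ∂Q, p ∈ stdSimplex ℝ (Fin K)) :
    (1 / 2) * (⨅ q : stdSimplex ℝ (Fin K), ∫ p, ∑ y, |p y - (q : Fin K → ℝ) y| ∂Q)
      ≤ (K - 1) / K := by
  obtain ⟨p₀, hp₀⟩ := hsupp.exists
  have := stdSimplex.nonempty_of_mem hp₀
  have hnonneg : ∀ q : Fin K → ℝ, 0 ≤ fun p : Fin K → ℝ => ∑ y, |p y - q y| :=
    fun q p => sum_nonneg fun y _ => abs_nonneg _
  have hbdd : BddBelow (Set.range fun q : stdSimplex ℝ (Fin K) =>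
      ∫ p, ∑ y, |p y - (q : Fin K → ℝ) y| ∂Q) := by
    refine ⟨0, ?_⟩
    rintro _ ⟨q, rfl⟩
    exact integral_nonneg (hnonneg q)
  calc (1 / 2) * (⨅ q : stdSimplex ℝ (Fin K), ∫ p, ∑ y, |p y - (q : Fin K → ℝ) y| ∂Q)
      ≤ (1 / 2) * ∫ p, ∑ y, |p y - (K : ℝ)⁻¹| ∂Q := by
        gcongr
        convert ciInf_le hbdd stdSimplex.barycenter using 5
        simp only [stdSimplex.barycenter, Fintype.card_fin]
        rfl
    _ ≤ (1 / 2) * ∫ _, 2 * (1 - (K : ℝ)⁻¹) ∂Q := by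
        refine mul_le_mul_of_nonneg_left ?_ (by norm_num)
        refine integral_mono_of_nonneg (.of_forall (hnonneg _)) (integrable_const _) ?_
        filter_upwards [hsupp] with p hp
        simpa using stdSimplex.sum_abs_sub_inv_card_le hp
    _ = (K - 1) / K := by
        have hK : (K : ℝ) ≠ 0 := by simpa using Fintype.card_ne_zero (α := Fin K)
        simp only [integral_const, probReal_univ, one_smul]
        field_simp

/-- For a probability measure `Q` on the probability simplex on `Fin K`
(`K ≥ 2`), the epistemic uncertainty
`EU(Q) = (1/2) * min_{q ∈ Δ} E_{p∼Q}[‖p - q‖₁]` satisfies `EU(Q) ≤ (K-1)/K`. -/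
theorem stmt_6 {K : ℕ} (hK : 2 ≤ K)
    (Q : Measure (Fin K → ℝ)) [IsProbabilityMeasure Q]
    (hsupp : ∀ᵐ p ∂Q, p ∈ stdSimplex ℝ (Fin K))
    (hint : ∀ q : Fin K → ℝ,
      Integrable (fun p : Fin K → ℝ => ∑ y, |p y - q y|) Q) :
    (1 / 2) * (⨅ q : stdSimplex ℝ (Fin K), ∫ p, ∑ y, |p y - (q : Fin K → ℝ) y| ∂Q)
      ≤ (K - 1) / K :=
  stmt_6_general Q hsupp
end

section
/- Let α₁, …, α_K > 0 with α₀ = ∑ᵢ αᵢ, and let Fᵢ denote the CDF of the Beta(αᵢ, α₀ − αᵢ) distribution. The function h(q) = (1/2)·∑ᵢ [ (αᵢ/α₀)(1 − 2·F_{αᵢ+1, α₀−αᵢ}(qᵢ)) + qᵢ(2·Fᵢ(qᵢ) − 1) ] on (0,1)^K restricted to the hyperplane ∑ᵢ qᵢ = 1 has a unique minimizer. -/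
/-!
Write `Fᵢ` for the CDF of `Beta(αᵢ, α₀ - αᵢ)`. Thanks to `B(a + 1, b) = a / (a + b) · B(a, b)`, the
`i`-th summand of the objective is continuous on `[0, 1]` with derivative `2 Fᵢ - 1` on `(0, 1)`.
Since each `Fᵢ` is strictly increasing, the separable objective is strictly convex on the closed
simplex, so by compactness it has exactly one minimizer there. This minimizer lies in the open
simplex: all the derivatives equal `-1` at `0`, so if `qᵢ = 0`, moving a little mass from a positive
coordinate `qⱼ` to `qᵢ` trades the slope `2 Fⱼ(qⱼ) - 1 > -1` for one close to `-1`, which strictly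
decreases the objective.
-/

open Finset MeasureTheory

/-- The (unnormalized) Beta integrand. -/
noncomputable def betaKernel (a b x : ℝ) : ℝ := x ^ (a - 1) * (1 - x) ^ (b - 1)

/-- The CDF of the Beta distribution `Beta(a, b)` at `q ∈ (0,1)`. -/
noncomputable def betaCDF (a b q : ℝ) : ℝ :=
  (∫ x in Set.Ioo 0 q, betaKernel a b x) / ∫ x in Set.Ioo (0 : ℝ) 1, betaKernel a b x

open ProbabilityTheory Topology

lemma betaKernel_pos {a b x : ℝ} (hx : x ∈ Set.Ioo 0 1) : 0 < betaKernel a b x :=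
  mul_pos (Real.rpow_pos_of_pos hx.1 _) (Real.rpow_pos_of_pos (sub_pos.2 hx.2) _)

lemma continuousAt_betaKernel {a b x : ℝ} (hx : x ∈ Set.Ioo 0 1) :
    ContinuousAt (betaKernel a b) x :=
  (continuousAt_id.rpow_const (Or.inl hx.1.ne')).mul
    ((continuousAt_const.sub continuousAt_id).rpow_const (Or.inl (sub_pos.2 hx.2).ne'))

lemma measurable_betaKernel (a b : ℝ) : Measurable (betaKernel a b) := by
  unfold betaKernel; fun_prop

lemma betaKernel_add_one_left {a b x : ℝ} (hx : 0 < x) :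
    betaKernel (a + 1) b x = x * betaKernel a b x := by
  rw [betaKernel, betaKernel, add_sub_cancel_right, ← sub_add_cancel a 1,
    Real.rpow_add_one hx.ne', add_sub_cancel_right]
  ring

lemma beta_add_one_left {a b : ℝ} (ha : 0 < a) (hb : 0 < b) :
    beta (a + 1) b = a / (a + b) * beta a b := by
  rw [beta, beta, add_right_comm, Real.Gamma_add_one ha.ne', Real.Gamma_add_one (by positivity)]
  field_simp

lemma lintegral_betaKernel_div_beta {a b : ℝ} (ha : 0 < a) (hb : 0 < b) :
    ∫⁻ x in Set.Ioo 0 1, ENNReal.ofReal (1 / beta a b * betaKernel a b x) = 1 := by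
  have := lintegral_betaPDF_eq_one ha hb
  rw [lintegral_betaPDF] at this
  simpa only [betaKernel, mul_assoc] using this

lemma betaKernel_div_beta_nonneg_ae {a b : ℝ} (ha : 0 < a) (hb : 0 < b) :
    0 ≤ᵐ[volume.restrict (Set.Ioo 0 1)] fun x => 1 / beta a b * betaKernel a b x :=
  ae_restrict_of_forall_mem measurableSet_Ioo fun _ hx =>
    mul_nonneg (one_div_pos.2 (beta_pos ha hb)).le (betaKernel_pos hx).le

lemma integrableOn_betaKernel {a b : ℝ} (ha : 0 < a) (hb : 0 < b) :
    IntegrableOn (betaKernel a b) (Set.Ioo 0 1) := by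
  have hint : IntegrableOn (fun x => 1 / beta a b * betaKernel a b x) (Set.Ioo 0 1) :=
    ⟨((measurable_betaKernel a b).const_mul _).aestronglyMeasurable,
      (hasFiniteIntegral_iff_ofReal (betaKernel_div_beta_nonneg_ae ha hb)).2
        (by rw [lintegral_betaKernel_div_beta ha hb]; exact ENNReal.one_lt_top)⟩
  simpa [(beta_pos ha hb).ne', IntegrableOn] using hint.const_mul (beta a b)

lemma integral_betaKernel {a b : ℝ} (ha : 0 < a) (hb : 0 < b) :
    ∫ x in Set.Ioo 0 1, betaKernel a b x = beta a b := by
  have h := integral_eq_lintegral_of_nonneg_ae (betaKernel_div_beta_nonneg_ae ha hb)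
    ((measurable_betaKernel a b).const_mul _).aestronglyMeasurable
  rw [lintegral_betaKernel_div_beta ha hb, ENNReal.toReal_one, integral_const_mul,
    one_div_mul_eq_div, div_eq_one_iff_eq (beta_pos ha hb).ne'] at h
  exact h

lemma integrableOn_Icc_betaKernel {a b : ℝ} (ha : 0 < a) (hb : 0 < b) :
    IntegrableOn (betaKernel a b) (Set.Icc 0 1) := by
  rw [integrableOn_Icc_iff_integrableOn_Ioo]
  exact integrableOn_betaKernel ha hb

lemma intervalIntegrable_betaKernel {a b c d : ℝ} (ha : 0 < a) (hb : 0 < b)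
    (hcd : Set.uIcc c d ⊆ Set.Icc 0 1) : IntervalIntegrable (betaKernel a b) volume c d := by
  rw [intervalIntegrable_iff]
  exact (integrableOn_Icc_betaKernel ha hb).mono_set (Set.uIoc_subset_uIcc.trans hcd)

lemma betaCDF_eq {a b q : ℝ} (ha : 0 < a) (hb : 0 < b) (hq : 0 ≤ q) :
    betaCDF a b q = (∫ x in 0..q, betaKernel a b x) / beta a b := by
  rw [betaCDF, integral_betaKernel ha hb, intervalIntegral.integral_of_le hq,
    integral_Ioc_eq_integral_Ioo]

lemma betaCDF_zero (a b : ℝ) : betaCDF a b 0 = 0 := by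
  simp [betaCDF]

lemma betaCDF_strictMonoOn {a b : ℝ} (ha : 0 < a) (hb : 0 < b) :
    StrictMonoOn (betaCDF a b) (Set.Icc 0 1) := by
  intro x hx y hy hxy
  have hpos : 0 < ∫ t in x..y, betaKernel a b t :=
    intervalIntegral.intervalIntegral_pos_of_pos_on
      (intervalIntegrable_betaKernel ha hb (by
        rw [Set.uIcc_of_le hxy.le]; exact Set.Icc_subset_Icc hx.1 hy.2))
      (fun t ht => betaKernel_pos ⟨hx.1.trans_lt ht.1, ht.2.trans_le hy.2⟩) hxy
  rw [betaCDF_eq ha hb hx.1, betaCDF_eq ha hb hy.1, ← sub_pos, ← sub_div,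
    intervalIntegral.integral_interval_sub_left]
  · exact div_pos hpos (beta_pos ha hb)
  exacts [intervalIntegrable_betaKernel ha hb
      (Set.uIcc_subset_Icc (Set.left_mem_Icc.2 zero_le_one) hy),
    intervalIntegrable_betaKernel ha hb
      (Set.uIcc_subset_Icc (Set.left_mem_Icc.2 zero_le_one) hx)]

lemma betaCDF_continuousOn {a b : ℝ} (ha : 0 < a) (hb : 0 < b) :
    ContinuousOn (betaCDF a b) (Set.Icc 0 1) := by
  have h := intervalIntegral.continuousOn_primitive_interval (a := 0) (b := 1)
    (f := betaKernel a b)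
    (by rw [Set.uIcc_of_le zero_le_one]; exact integrableOn_Icc_betaKernel ha hb)
  rw [Set.uIcc_of_le zero_le_one] at h
  exact (h.div_const _).congr fun q hq => betaCDF_eq ha hb hq.1

lemma hasDerivAt_betaCDF {a b q : ℝ} (ha : 0 < a) (hb : 0 < b) (hq : q ∈ Set.Ioo 0 1) :
    HasDerivAt (betaCDF a b) (betaKernel a b q / beta a b) q := by
  have h := intervalIntegral.integral_hasDerivAt_right
    (intervalIntegrable_betaKernel ha hb (Set.uIcc_subset_Icc (Set.left_mem_Icc.2 zero_le_one)
      (Set.Ioo_subset_Icc_self hq)))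
    (measurable_betaKernel a b).stronglyMeasurable.stronglyMeasurableAtFilter
    (continuousAt_betaKernel hq)
  refine (h.div_const _).congr_of_eventuallyEq ?_
  filter_upwards [Ioi_mem_nhds hq.1] with x hx using betaCDF_eq ha hb (le_of_lt hx)

/-- `E |p - q|` for `p ∼ Beta(a, b)`. -/
noncomputable def betaAbsLoss (a b q : ℝ) : ℝ :=
  a / (a + b) * (1 - 2 * betaCDF (a + 1) b q) + q * (2 * betaCDF a b q - 1)

lemma hasDerivAt_betaAbsLoss {a b q : ℝ} (ha : 0 < a) (hb : 0 < b) (hq : q ∈ Set.Ioo 0 1) :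
    HasDerivAt (betaAbsLoss a b) (2 * betaCDF a b q - 1) q := by
  have h₁ := hasDerivAt_betaCDF (a := a + 1) (by linarith) hb hq
  have h₂ := hasDerivAt_betaCDF ha hb hq
  refine (((h₁.const_mul 2).const_sub 1).const_mul _ |>.add
    ((hasDerivAt_id' q).mul ((h₂.const_mul 2).sub_const 1))).congr_deriv ?_
  rw [betaKernel_add_one_left hq.1, beta_add_one_left ha hb]
  have hB := beta_pos ha hb
  field_simp
  ring

lemma continuousOn_betaAbsLoss {a b : ℝ} (ha : 0 < a) (hb : 0 < b) :
    ContinuousOn (betaAbsLoss a b) (Set.Icc 0 1) := by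
  have h₁ := betaCDF_continuousOn (by linarith : 0 < a + 1) hb
  have h₂ := betaCDF_continuousOn ha hb
  unfold betaAbsLoss
  fun_prop

lemma strictConvexOn_Icc_of_hasDerivAt {g f : ℝ → ℝ} {a b : ℝ}
    (hg : ContinuousOn g (Set.Icc a b)) (hg' : ∀ x ∈ Set.Ioo a b, HasDerivAt g (f x) x)
    (hf : StrictMonoOn f (Set.Ioo a b)) : StrictConvexOn ℝ (Set.Icc a b) g :=
  StrictMonoOn.strictConvexOn_of_deriv (convex_Icc a b) hg <| by
    rw [interior_Icc]
    exact hf.congr fun x hx => (hg' x hx).deriv.symm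

lemma StrictConvexOn.sum_apply {ι : Type*} [Fintype ι] {s : ι → Set ℝ} {g : ι → ℝ → ℝ}
    (hg : ∀ i, StrictConvexOn ℝ (s i) (g i)) :
    StrictConvexOn ℝ (Set.univ.pi s) (fun q => ∑ i, g i (q i)) := by
  refine ⟨convex_pi fun i _ => (hg i).1, fun x hx y hy hxy a b ha hb hab => ?_⟩
  obtain ⟨i, hi⟩ := Function.ne_iff.1 hxy
  simp only [Pi.add_apply, Pi.smul_apply, smul_eq_mul, mul_sum, ← sum_add_distrib]
  exact sum_lt_sum
    (fun k _ => (hg k).convexOn.2 (hx k trivial) (hy k trivial) ha.le hb.le hab)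
    ⟨i, mem_univ i, (hg i).2 (hx i trivial) (hy i trivial) hi ha hb hab⟩

lemma sum_apply_update_update {ι : Type*} [Fintype ι] [DecidableEq ι] (G : ι → ℝ → ℝ)
    (w : ι → ℝ) {i j : ι} (hij : i ≠ j) (x y : ℝ) :
    ∑ k, G k (Function.update (Function.update w i x) j y k) + G i (w i) + G j (w j) =
      ∑ k, G k (w k) + G i x + G j y := by
  have hj : j ∈ univ.erase i := mem_erase.2 ⟨hij.symm, mem_univ j⟩
  rw [← add_sum_erase _ _ (mem_univ i), ← add_sum_erase _ _ hj,
    ← add_sum_erase _ _ (mem_univ i), ← add_sum_erase _ _ hj,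
    sum_congr rfl fun k hk => by
      rw [Function.update_of_ne (ne_of_mem_erase hk),
        Function.update_of_ne (ne_of_mem_erase (mem_of_mem_erase hk))]]
  simp only [Function.update_self, Function.update_of_ne hij]
  ring

lemma exists_add_sub_lt {g₁ g₂ f₁ f₂ : ℝ → ℝ}
    (hg₁ : ContinuousOn g₁ (Set.Icc 0 1)) (hg₂ : ContinuousOn g₂ (Set.Icc 0 1))
    (hg₁' : ∀ x ∈ Set.Ioo 0 1, HasDerivAt g₁ (f₁ x) x)
    (hg₂' : ∀ x ∈ Set.Ioo 0 1, HasDerivAt g₂ (f₂ x) x)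
    (hf₁ : ContinuousWithinAt f₁ (Set.Icc 0 1) 0) (hf₂ : MonotoneOn f₂ (Set.Icc 0 1))
    {r s : ℝ} (hr : 0 < r) (hrs : r < s) (hs : s ≤ 1) (hlt : f₁ 0 < f₂ r) :
    ∃ t ∈ Set.Ioo 0 s, g₁ t + g₂ (s - t) < g₁ 0 + g₂ s := by
  obtain ⟨δ, hδ, hδf⟩ : ∃ δ > 0, ∀ x ∈ Set.Ico 0 δ, f₁ x < f₂ r := by
    have : ∀ᶠ x in 𝓝[Set.Icc 0 1] 0, f₁ x < f₂ r := hf₁.eventually_lt_const hlt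
    rw [nhdsWithin_Icc_eq_nhdsGE zero_lt_one] at this
    exact mem_nhdsGE_iff_exists_Ico_subset.1 this
  set t := min (δ / 2) (s - r)
  have ht : 0 < t := lt_min (half_pos hδ) (by linarith)
  have htδ : t < δ := (min_le_left _ _).trans_lt (half_lt_self hδ)
  have hts : t ≤ s - r := min_le_right _ _
  have hanti : StrictAntiOn (fun x => g₁ x + g₂ (s - x)) (Set.Icc 0 t) := by
    refine strictAntiOn_of_hasDerivWithinAt_neg (convex_Icc 0 t) ?_
      (f' := fun x => f₁ x - f₂ (s - x)) (fun x hx => ?_) (fun x hx => ?_)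
    · exact (hg₁.mono (Set.Icc_subset_Icc_right (by linarith))).add
        (hg₂.comp (continuousOn_const.sub continuousOn_id) fun x hx =>
          ⟨by linarith [hx.2], by linarith [hx.1]⟩)
    · rw [interior_Icc] at hx
      have h₂ := (hg₂' (s - x) ⟨by linarith [hx.2], by linarith [hx.1]⟩).comp x
        ((hasDerivAt_id' x).const_sub s)
      exact ((hg₁' x ⟨hx.1, by linarith [hx.2]⟩).add h₂).hasDerivWithinAt.congr_deriv (by ring)
    · rw [interior_Icc] at hx
      have h₁ := hδf x ⟨hx.1.le, by linarith [hx.2]⟩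
      have h₂ := hf₂ ⟨hr.le, by linarith⟩ ⟨by linarith [hx.2], by linarith [hx.1]⟩
        (show r ≤ s - x by linarith [hx.2])
      linarith
  have := hanti (Set.left_mem_Icc.2 ht.le) (Set.right_mem_Icc.2 ht.le) ht
  exact ⟨t, ⟨ht, by linarith⟩, by simpa using this⟩

section SimplexMinimization

variable {ι : Type*} [Fintype ι] {g f : ι → ℝ → ℝ}

lemma exists_sum_lt_of_apply_eq_zero
    (hg : ∀ i, ContinuousOn (g i) (Set.Icc 0 1))
    (hg' : ∀ i, ∀ x ∈ Set.Ioo 0 1, HasDerivAt (g i) (f i x) x)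
    (hf : ∀ i, StrictMonoOn (f i) (Set.Icc 0 1))
    (hf₀ : ∀ i, ContinuousWithinAt (f i) (Set.Icc 0 1) 0) (hf_eq : ∀ i j, f i 0 = f j 0)
    {w : ι → ℝ} (hw : w ∈ stdSimplex ℝ ι) {i : ι} (hi : w i = 0) :
    ∃ z ∈ stdSimplex ℝ ι, ∑ k, g k (z k) < ∑ k, g k (w k) := by
  classical
  obtain ⟨j, -, hj⟩ : ∃ j ∈ univ, (0 : ι → ℝ) j < w j :=
    exists_lt_of_sum_lt (by simp [hw.2])
  have hij : i ≠ j := by rintro rfl; simp [hi] at hj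
  have hwj : w j ≤ 1 := (mem_Icc_of_mem_stdSimplex hw j).2
  have hlt : f i 0 < f j (w j / 2) := hf_eq i j ▸
    hf j (Set.left_mem_Icc.2 zero_le_one) ⟨(half_pos hj).le, by linarith⟩ (half_pos hj)
  obtain ⟨t, ht, hdesc⟩ := exists_add_sub_lt (hg i) (hg j) (hg' i) (hg' j) (hf₀ i)
    (hf j).monotoneOn (half_pos hj) (half_lt_self hj) hwj hlt
  refine ⟨Function.update (Function.update w i t) j (w j - t), ⟨fun k => ?_, ?_⟩, ?_⟩
  · simp only [Function.update_apply]
    split_ifs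
    exacts [by linarith [ht.2], ht.1.le, hw.1 k]
  · have := sum_apply_update_update (fun _ => id) w hij t (w j - t)
    simp only [id, hw.2] at this
    linarith
  · have := sum_apply_update_update g w hij t (w j - t)
    rw [hi] at this
    linarith

theorem existsUnique_minimizer_sum_apply_simplex [Nontrivial ι]
    (hg : ∀ i, ContinuousOn (g i) (Set.Icc 0 1))
    (hg' : ∀ i, ∀ x ∈ Set.Ioo 0 1, HasDerivAt (g i) (f i x) x)
    (hf : ∀ i, StrictMonoOn (f i) (Set.Icc 0 1))
    (hf₀ : ∀ i, ContinuousWithinAt (f i) (Set.Icc 0 1) 0) (hf_eq : ∀ i j, f i 0 = f j 0) :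
    ∃! q : ι → ℝ, ((∀ i, q i ∈ Set.Ioo 0 1) ∧ ∑ i, q i = 1) ∧
      ∀ q' : ι → ℝ, (∀ i, q' i ∈ Set.Ioo 0 1) → ∑ i, q' i = 1 →
        ∑ i, g i (q i) ≤ ∑ i, g i (q' i) := by
  classical
  set G := fun q : ι → ℝ => ∑ i, g i (q i)
  have hmem : ∀ q : ι → ℝ, (∀ i, q i ∈ Set.Ioo 0 1) → ∑ i, q i = 1 → q ∈ stdSimplex ℝ ι :=
    fun q hq hsum => ⟨fun i => (hq i).1.le, hsum⟩
  have hconv : StrictConvexOn ℝ (stdSimplex ℝ ι) G :=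
    (StrictConvexOn.sum_apply fun i => strictConvexOn_Icc_of_hasDerivAt (hg i) (hg' i)
      ((hf i).mono Set.Ioo_subset_Icc_self)).subset
      (fun q hq i _ => mem_Icc_of_mem_stdSimplex hq i) (convex_stdSimplex ℝ ι)
  have hcont : ContinuousOn G (stdSimplex ℝ ι) := continuousOn_finsetSum _ fun i _ =>
    (hg i).comp (continuous_apply i).continuousOn fun q hq => mem_Icc_of_mem_stdSimplex hq i
  obtain ⟨w, hw, hmin⟩ := (isCompact_stdSimplex ℝ ι).exists_isMinOn
    ⟨_, single_mem_stdSimplex ℝ (Classical.arbitrary ι)⟩ hcont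
  have hpos : ∀ i, 0 < w i := fun i => (hw.1 i).lt_of_ne' fun hi => by
    obtain ⟨z, hz, hlt⟩ := exists_sum_lt_of_apply_eq_zero hg hg' hf hf₀ hf_eq hw hi
    exact (isMinOn_iff.1 hmin z hz).not_gt hlt
  have hw_mem : ∀ i, w i ∈ Set.Ioo 0 1 := fun i => by
    obtain ⟨j, hj⟩ := exists_ne i
    refine ⟨hpos i, hw.2 ▸ single_lt_sum hj (mem_univ i) (mem_univ j)
      (hpos j) fun k _ _ => hw.1 k⟩
  refine ⟨w, ⟨⟨hw_mem, hw.2⟩, fun q' hq' hsum => isMinOn_iff.1 hmin q' (hmem q' hq' hsum)⟩, ?_⟩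
  rintro y ⟨⟨hy, hysum⟩, hymin⟩
  refine hconv.eq_of_isMinOn (isMinOn_iff.2 fun z hz => ?_) hmin (hmem y hy hysum) hw
  exact (hymin w hw_mem hw.2).trans (isMinOn_iff.1 hmin z hz)

end SimplexMinimization

/-- For `α i > 0` with `α₀ = ∑ i, α i`, the function
`h q = (1/2) ∑ i, [(α i / α₀)(1 - 2 F_{α i + 1, α₀ - α i}(q i))
      + q i (2 F_{α i, α₀ - α i}(q i) - 1)]`
on `(0,1)^K` restricted to the hyperplane `∑ i, q i = 1` has a unique minimizer. -/
theorem stmt_16 {K : ℕ} (hK : 2 ≤ K)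
    (α : Fin K → ℝ) (hα : ∀ i, 0 < α i) (α₀ : ℝ) (hα₀ : α₀ = ∑ i, α i) :
    ∃! q : Fin K → ℝ,
      ((∀ i, q i ∈ Set.Ioo (0 : ℝ) 1) ∧ ∑ i, q i = 1) ∧
        ∀ q' : Fin K → ℝ, (∀ i, q' i ∈ Set.Ioo (0 : ℝ) 1) → ∑ i, q' i = 1 →
          (1 / 2) * ∑ i, ((α i / α₀) * (1 - 2 * betaCDF (α i + 1) (α₀ - α i) (q i))
              + q i * (2 * betaCDF (α i) (α₀ - α i) (q i) - 1))
            ≤ (1 / 2) * ∑ i, ((α i / α₀) * (1 - 2 * betaCDF (α i + 1) (α₀ - α i) (q' i))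
              + q' i * (2 * betaCDF (α i) (α₀ - α i) (q' i) - 1)) := by
  have : Nontrivial (Fin K) := Fin.nontrivial_iff_two_le.2 hK
  have hb : ∀ i, 0 < α₀ - α i := fun i => by
    obtain ⟨j, hj⟩ := exists_ne i
    rw [hα₀, sub_pos]
    exact single_lt_sum hj (mem_univ i) (mem_univ j) (hα j) fun k _ _ => (hα k).le
  have h := existsUnique_minimizer_sum_apply_simplex
    (g := fun i => betaAbsLoss (α i) (α₀ - α i))
    (f := fun i x => 2 * betaCDF (α i) (α₀ - α i) x - 1)
    (fun i => continuousOn_betaAbsLoss (hα i) (hb i))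
    (fun i _ hx => hasDerivAt_betaAbsLoss (hα i) (hb i) hx)
    (fun i x hx y hy hxy => by linarith [betaCDF_strictMonoOn (hα i) (hb i) hx hy hxy])
    (fun i => ((continuousOn_const.mul (betaCDF_continuousOn (hα i) (hb i))).sub
      continuousOn_const) 0 (Set.left_mem_Icc.2 zero_le_one))
    (fun i j => by simp only [betaCDF_zero])
  simp only [betaAbsLoss, add_sub_cancel] at h
  simpa only [mul_le_mul_iff_right₀ one_half_pos] using h
end
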